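/- arXiv:0911.4245 — 3 statements merged into one kernel-verified Lean document; each statement's English description precedes it below -/
import Mathlib

section
/- Let γ ⊆ {1,…,n} be a nonempty proper subset with complement γ̄. If a unit vector ψ on n qubits is separable with respect to the bipartition {γ, γ̄}, then C²_{γ,δ}(ψ) = 0 for every δ ⊆ γ̄. -/
open Finset

/-- Bit strings of length `n` (computational basis labels for `n` qubits). -/
abbrev Bits (n : ℕ) := Fin n → Bool

/-- `bflip δ j` is the bit string `j` with the bits in positions `δ` flipped. -/
def bflip {n : ℕ} (δ : Finset (Fin n)) (j : Bits n) : Bits n :=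
  fun i => if i ∈ δ then !(j i) else j i

/-- The generalized (squared) concurrence `C²_{γ,δ}(ψ)` of a pure state `ψ`,
for disjoint subsets `γ, δ ⊆ {1,…,n}`. -/
noncomputable def Csq {n : ℕ} (γ δ : Finset (Fin n)) (ψ : Bits n → ℂ) : ℝ :=
  ∑ j : Bits n,
    ‖(starRingEnd ℂ) (ψ (bflip (γ ∪ δ) j)) * (starRingEnd ℂ) (ψ j) -
      (starRingEnd ℂ) (ψ (bflip γ j)) * (starRingEnd ℂ) (ψ (bflip δ j))‖ ^ 2

/-- A pure state `ψ` is separable with respect to the bipartition `{γ, γ̄}`: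
it is a product of an amplitude function on the qubits in `γ` and one on those in `γ̄`. -/
def SeparableAcross {n : ℕ} (γ : Finset (Fin n)) (ψ : Bits n → ℂ) : Prop :=
  ∃ (a : ({i // i ∈ γ} → Bool) → ℂ) (b : ({i // i ∈ γᶜ} → Bool) → ℂ),
    ∀ j : Bits n, ψ j = a (fun i => j i.1) * b (fun i => j i.1)

/-- If a unit vector `ψ` on `n` qubits is separable with respect to the bipartition
`{γ, γ̄}` (for `γ` a nonempty proper subset), then `C²_{γ,δ}(ψ) = 0` for every `δ ⊆ γ̄`. -/
theorem Csq_eq_zero_of_separable (n : ℕ) (hn : 2 ≤ n)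
    (γ : Finset (Fin n)) (hne : γ.Nonempty) (hpr : γ ≠ Finset.univ)
    (ψ : Bits n → ℂ) (hψ : ∑ j, ‖ψ j‖ ^ 2 = 1)
    (hsep : SeparableAcross γ ψ) :
    ∀ δ : Finset (Fin n), δ ⊆ γᶜ → Csq γ δ ψ = 0 := by
  intro δ hδ
  obtain ⟨a, b, hab⟩ := hsep
  unfold Csq
  apply Finset.sum_eq_zero
  intro j _
  have h1 : (fun i : {i // i ∈ γ} => bflip (γ ∪ δ) j i.1)
      = (fun i : {i // i ∈ γ} => bflip γ j i.1) := by
    funext i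
    simp [bflip, Finset.mem_union, i.2]
  have h2 : (fun i : {i // i ∈ γᶜ} => bflip (γ ∪ δ) j i.1)
      = (fun i : {i // i ∈ γᶜ} => bflip δ j i.1) := by
    funext i
    have hiγ : i.1 ∉ γ := Finset.mem_compl.mp i.2
    simp [bflip, Finset.mem_union, hiγ]
  have h3 : (fun i : {i // i ∈ γᶜ} => bflip γ j i.1)
      = (fun i : {i // i ∈ γᶜ} => j i.1) := by
    funext i
    have hiγ : i.1 ∉ γ := Finset.mem_compl.mp i.2
    simp [bflip, hiγ]
  have h4 : (fun i : {i // i ∈ γ} => bflip δ j i.1)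
      = (fun i : {i // i ∈ γ} => j i.1) := by
    funext i
    have hiδ : i.1 ∉ δ := fun h => Finset.mem_compl.mp (hδ h) i.2
    simp [bflip, hiδ]
  have hz : (starRingEnd ℂ) (ψ (bflip (γ ∪ δ) j)) * (starRingEnd ℂ) (ψ j) -
      (starRingEnd ℂ) (ψ (bflip γ j)) * (starRingEnd ℂ) (ψ (bflip δ j)) = 0 := by
    simp only [hab, h1, h2, h3, h4, map_mul]
    ring
  rw [hz]
  simp
end

section
/- Let Γ = {γ_1,…,γ_m} be a partition of {1,…,n} into m parts. If a unit vector ψ on n qubits is separable with respect to each bipartition {γ_i, γ̄_i} for i = 1,…,m, then ψ is a full product across Γ: there exist functions a_i : ({0,1}-strings indexed by γ_i) → ℂ, i = 1,…,m, such that ψ(j) = ∏_{i=1}^m a_i(j|_{γ_i}) for all bit strings j. -/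
open Finset

/-- `P` is a partition of `{1,…,n}` into `m` nonempty pairwise disjoint parts. -/
def IsMPartition (n m : ℕ) (P : Finset (Finset (Fin n))) : Prop :=
  P.card = m ∧ (∀ γ ∈ P, γ.Nonempty) ∧
    (∀ γ ∈ P, ∀ γ' ∈ P, γ ≠ γ' → Disjoint γ γ') ∧ P.sup id = Finset.univ

/-!
Fix a basis string `j₀` with `ψ j₀ ≠ 0` and rescale so that `ψ j₀ = 1`. Separability across `γ`
says that `ψ j * ψ k` is unchanged when `j` and `k` swap their bits on `γ`; taking `k = j₀`, this
splits off the part of `j` lying in `γ` as the factor `ψ (γ.piecewise j j₀)`. Peeling off the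
parts one at a time gives `ψ j = ∏ γ ∈ P, ψ (γ.piecewise j j₀)`, a full product.
-/

lemma Finset.piecewise_piecewise_union_of_disjoint {ι : Type*} {π : ι → Type*} [DecidableEq ι]
    {s t : Finset ι} (h : Disjoint s t) (f g : ∀ i, π i) :
    s.piecewise g ((s ∪ t).piecewise f g) = t.piecewise f g := by
  ext i
  by_cases hs : i ∈ s
  · simp [hs, disjoint_left.1 h hs]
  · by_cases ht : i ∈ t <;> simp [hs, ht]

def IsFullProduct {n : ℕ} (P : Finset (Finset (Fin n))) (ψ : Bits n → ℂ) : Prop :=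
  ∃ a : (γ : Finset (Fin n)) → (({i // i ∈ γ} → Bool) → ℂ),
    ∀ j : Bits n, ψ j = ∏ γ ∈ P, a γ (fun i => j i.1)

section

variable {n : ℕ}

namespace SeparableAcross

variable {γ : Finset (Fin n)} {ψ : Bits n → ℂ}

theorem mul_eq_mul_piecewise (h : SeparableAcross γ ψ) (j k : Bits n) :
    ψ j * ψ k = ψ (γ.piecewise j k) * ψ (γ.piecewise k j) := by
  obtain ⟨a, b, hab⟩ := h
  have restrict_in (j k : Bits n) :
      (fun i : {i // i ∈ γ} => γ.piecewise j k i.1) = fun i => j i.1 :=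
    funext fun i => piecewise_eq_of_mem _ _ _ i.2
  have restrict_out (j k : Bits n) :
      (fun i : {i // i ∈ γᶜ} => γ.piecewise j k i.1) = fun i => k i.1 :=
    funext fun i => piecewise_eq_of_notMem _ _ _ (mem_compl.1 i.2)
  rw [hab, hab, hab (γ.piecewise j k), hab (γ.piecewise k j), restrict_in, restrict_out,
    restrict_in, restrict_out]
  ring

theorem const_mul (h : SeparableAcross γ ψ) (c : ℂ) :
    SeparableAcross γ (fun j => c * ψ j) := by
  obtain ⟨a, b, hab⟩ := h
  exact ⟨fun x => c * a x, b, fun j => (congrArg (c * ·) (hab j)).trans (mul_assoc _ _ _).symm⟩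

end SeparableAcross

theorem apply_sup_piecewise_eq_prod {φ : Bits n → ℂ} {j₀ : Bits n} (h₀ : φ j₀ = 1)
    {S : Finset (Finset (Fin n))} (hdisj : (S : Set (Finset (Fin n))).PairwiseDisjoint id)
    (hsep : ∀ γ ∈ S, SeparableAcross γ φ) (j : Bits n) :
    φ ((S.sup id).piecewise j j₀) = ∏ γ ∈ S, φ (γ.piecewise j j₀) := by
  induction S using Finset.induction_on with
  | empty => rw [sup_empty, bot_eq_empty, piecewise_empty, prod_empty, h₀]
  | insert γ S hγS ih =>
    rw [coe_insert, Set.pairwiseDisjoint_insert] at hdisj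
    have hγV : Disjoint γ (S.sup id) :=
      Finset.disjoint_sup_right.2 fun γ' hγ' => hdisj.2 γ' hγ' fun h => hγS (h ▸ hγ')
    set U := (insert γ S).sup id
    have hU : U = γ ∪ S.sup id := sup_insert
    calc φ (U.piecewise j j₀)
        = φ (U.piecewise j j₀) * φ j₀ := by rw [h₀, mul_one]
      _ = φ (γ.piecewise (U.piecewise j j₀) j₀) * φ (γ.piecewise j₀ (U.piecewise j j₀)) :=
          (hsep γ (mem_insert_self γ S)).mul_eq_mul_piecewise _ _
      _ = φ (γ.piecewise j j₀) * φ ((S.sup id).piecewise j j₀) := by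
          rw [piecewise_piecewise_of_subset_left (hU ▸ subset_union_left), hU,
            piecewise_piecewise_union_of_disjoint hγV]
      _ = ∏ γ' ∈ insert γ S, φ (γ'.piecewise j j₀) := by
          rw [prod_insert hγS, ih hdisj.1 fun γ' hγ' => hsep γ' (mem_insert_of_mem hγ')]

namespace IsFullProduct

variable {P : Finset (Finset (Fin n))}

theorem zero (hP : P.Nonempty) : IsFullProduct P 0 := by
  obtain ⟨γ₀, hγ₀⟩ := hP
  exact ⟨0, fun j => (prod_eq_zero hγ₀ rfl).symm⟩

theorem const_mul {ψ : Bits n → ℂ} (h : IsFullProduct P ψ) {γ₀ : Finset (Fin n)} (hγ₀ : γ₀ ∈ P)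
    (c : ℂ) : IsFullProduct P (fun j => c * ψ j) := by
  obtain ⟨a, ha⟩ := h
  refine ⟨fun γ x => (if γ = γ₀ then c else 1) * a γ x, fun j => ?_⟩
  rw [prod_mul_distrib, prod_ite_eq' P γ₀, if_pos hγ₀, ← ha]

end IsFullProduct

theorem isFullProduct_of_separableAcross {P : Finset (Finset (Fin n))} (hne : P.Nonempty)
    (hdisj : (P : Set (Finset (Fin n))).PairwiseDisjoint id) (hcover : P.sup id = univ)
    {ψ : Bits n → ℂ} (hsep : ∀ γ ∈ P, SeparableAcross γ ψ) : IsFullProduct P ψ := by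
  by_cases hψ : ψ = 0
  · exact hψ ▸ IsFullProduct.zero hne
  obtain ⟨j₀, hj₀⟩ := Function.ne_iff.1 hψ
  set φ : Bits n → ℂ := fun j => (ψ j₀)⁻¹ * ψ j
  have hφ : IsFullProduct P φ := by
    refine ⟨fun γ x => φ (γ.piecewise (fun i => if h : i ∈ γ then x ⟨i, h⟩ else false) j₀),
      fun j => ?_⟩
    have h₀ : φ j₀ = 1 := inv_mul_cancel₀ hj₀
    have hprod := apply_sup_piecewise_eq_prod h₀ hdisj (fun γ hγ => (hsep γ hγ).const_mul _) j
    rw [hcover, piecewise_univ] at hprod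
    rw [hprod]
    refine prod_congr rfl fun γ _ => congrArg φ (piecewise_congr _ (fun i hi => ?_) fun _ _ => rfl)
    simp [hi]
  obtain ⟨γ₀, hγ₀⟩ := hne
  convert hφ.const_mul hγ₀ (ψ j₀) using 2 with j
  exact (mul_inv_cancel_left₀ hj₀ _).symm

end

theorem full_product_of_separable_each_part_general (n m : ℕ) (hn : 2 ≤ n)
    (P : Finset (Finset (Fin n))) (hP : IsMPartition n m P)
    (ψ : Bits n → ℂ)
    (hsep : ∀ γ ∈ P, SeparableAcross γ ψ) :
    ∃ a : (γ : Finset (Fin n)) → (({i // i ∈ γ} → Bool) → ℂ),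
      ∀ j : Bits n, ψ j = ∏ γ ∈ P, a γ (fun i => j i.1) := by
  obtain ⟨-, -, hdisj, hcover⟩ := hP
  have hne : P.Nonempty := by
    refine nonempty_iff_ne_empty.2 fun hP => ?_
    rw [hP, sup_empty] at hcover
    exact notMem_empty (⟨0, by omega⟩ : Fin n) (hcover ▸ mem_univ _)
  exact isFullProduct_of_separableAcross hne hdisj hcover hsep

/-- If a unit vector `ψ` on `n` qubits is separable with respect to each bipartition
`{γ_i, γ̄_i}` determined by the parts of a partition `Γ = {γ_1,…,γ_m}`, then `ψ` is a
full product across `Γ`: `ψ(j) = ∏_i a_i(j|_{γ_i})` for suitable functions `a_i`. -/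
theorem full_product_of_separable_each_part (n m : ℕ) (hn : 2 ≤ n)
    (P : Finset (Finset (Fin n))) (hP : IsMPartition n m P)
    (ψ : Bits n → ℂ) (hψ : ∑ j, ‖ψ j‖ ^ 2 = 1)
    (hsep : ∀ γ ∈ P, SeparableAcross γ ψ) :
    ∃ a : (γ : Finset (Fin n)) → (({i // i ∈ γ} → Bool) → ℂ),
      ∀ j : Bits n, ψ j = ∏ γ ∈ P, a γ (fun i => j i.1) :=
  full_product_of_separable_each_part_general n m hn P hP ψ hsep
end

section
/- For every unit vector ψ on n qubits and integers m, m' with 2 ≤ m' ≤ m ≤ n: if R_m(ψ) = 0 then R_{m'}(ψ) = 0 (an m-separable pure state can be regarded as an m'-separable state for any m' ≤ m). -/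
open Finset

/-- `η_γ(ψ) := ∑_{δ ⊆ γ̄} C²_{γ,δ}(ψ)`. -/
noncomputable def eta {n : ℕ} (γ : Finset (Fin n)) (ψ : Bits n → ℂ) : ℝ :=
  ∑ δ ∈ γᶜ.powerset, Csq γ δ ψ

instance (n m : ℕ) : DecidablePred (IsMPartition n m) := fun P => by
  unfold IsMPartition; infer_instance

/-- `ξ_Γ(ψ) := (1/m)·∑_{γ ∈ Γ} η_γ(ψ)` for a partition `Γ` into `m` parts. -/
noncomputable def xiP {n : ℕ} (P : Finset (Finset (Fin n))) (ψ : Bits n → ℂ) : ℝ :=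
  (1 / (P.card : ℝ)) * ∑ γ ∈ P, eta γ ψ

/-- The collection of all partitions of `{1,…,n}` into `m` parts. -/
def partitionsM (n m : ℕ) : Finset (Finset (Finset (Fin n))) :=
  Finset.univ.filter (IsMPartition n m)

/-- The Stirling number of the second kind `S(n,m)`: the number of partitions
of `{1,…,n}` into `m` nonempty parts. -/
def stirling2 (n m : ℕ) : ℕ := (partitionsM n m).card

/-- `R_m(ψ) := (∏_{|Γ| = m} ξ_Γ(ψ))^{1/S(n,m)}`, the product running over all
partitions of `{1,…,n}` into `m` parts (real power). -/
noncomputable def Rm (n m : ℕ) (ψ : Bits n → ℂ) : ℝ :=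
  (∏ P ∈ partitionsM n m, xiP P ψ) ^ (1 / (stirling2 n m : ℝ))

/-!
Write `ψ` as the matrix `M(x, y) = ψ(x, y)` with rows indexed by the bits in `γ` and columns by
the bits in `γᶜ`. Each summand of `η_γ(ψ)` is the squared modulus of a `2 × 2` minor of `conj M`,
so `η_γ(ψ) = 0` says exactly that `M` has rank at most one (`IsProductAcross`). That property
passes from two disjoint parts to their union, so any two parts of a partition with vanishing
`η`'s may be merged. Repeating this turns a witness to `R_m(ψ) = 0` (an `m`-partition all of
whose `η`'s vanish) into one for `R_{m'}(ψ) = 0`.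
-/

section

variable {n : ℕ}

lemma bflip_bflip_self (A : Finset (Fin n)) (j : Bits n) : bflip A (bflip A j) = j := by
  funext i
  by_cases hi : i ∈ A <;> simp [bflip, hi]

lemma bflip_union {A B : Finset (Fin n)} (hAB : Disjoint A B) (j : Bits n) :
    bflip (A ∪ B) j = bflip A (bflip B j) := by
  funext i
  by_cases hA : i ∈ A <;> by_cases hB : i ∈ B
  · exact absurd hB (disjoint_left.mp hAB hA)
  all_goals simp [bflip, hA, hB]

def IsProductAcross {R : Type*} [Mul R] (γ : Finset (Fin n)) (F : Bits n → R) : Prop :=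
  ∀ δ ⊆ γᶜ, ∀ j : Bits n, F (bflip (γ ∪ δ) j) * F j = F (bflip γ j) * F (bflip δ j)

lemma IsProductAcross.union {R : Type*} [CommRing R] [IsDomain R] {A B : Finset (Fin n)}
    {F : Bits n → R} (hAB : Disjoint A B) (hA : IsProductAcross A F)
    (hB : IsProductAcross B F) : IsProductAcross (A ∪ B) F := by
  intro D hD j
  rw [subset_compl_iff_disjoint_right] at hD
  obtain ⟨hDA, hDB⟩ := disjoint_union_right.mp hD
  have hBD : B ∪ D ⊆ Aᶜ :=
    subset_compl_iff_disjoint_right.mpr (disjoint_union_left.mpr ⟨hAB.symm, hDA⟩)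
  have e1 := hA (B ∪ D) hBD j
  have e2 := hB D (subset_compl_iff_disjoint_right.mpr hDB) j
  have e3 := hA B (subset_compl_iff_disjoint_right.mpr hAB.symm) j
  have e4 := hA (B ∪ D) hBD (bflip D j)
  rw [← union_assoc] at e1
  rw [← union_assoc, bflip_union hD.symm, bflip_bflip_self, bflip_union hDB.symm,
    bflip_bflip_self, ← bflip_union hDA.symm] at e4
  by_cases h0 : F j = 0
  · rw [h0, mul_zero]
    by_cases hDj : F (bflip D j) = 0
    · rw [hDj, mul_zero]
    · have hBj : F (bflip B j) = 0 := by
        rw [h0, mul_zero, eq_comm, mul_eq_zero] at e2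
        exact e2.resolve_right hDj
      rw [e4, hBj, mul_zero]
  · apply mul_right_cancel₀ h0
    linear_combination F j * e1 + F (bflip A j) * e2 - F (bflip D j) * e3

lemma csq_nonneg (γ δ : Finset (Fin n)) (ψ : Bits n → ℂ) : 0 ≤ Csq γ δ ψ :=
  sum_nonneg fun _ _ => by positivity

lemma eta_nonneg (γ : Finset (Fin n)) (ψ : Bits n → ℂ) : 0 ≤ eta γ ψ :=
  sum_nonneg fun δ _ => csq_nonneg γ δ ψ

lemma xiP_nonneg (P : Finset (Finset (Fin n))) (ψ : Bits n → ℂ) : 0 ≤ xiP P ψ :=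
  mul_nonneg (by positivity) (sum_nonneg fun γ _ => eta_nonneg γ ψ)

lemma eta_eq_zero_iff (γ : Finset (Fin n)) (ψ : Bits n → ℂ) :
    eta γ ψ = 0 ↔ IsProductAcross γ (fun j => starRingEnd ℂ (ψ j)) := by
  rw [eta, sum_eq_zero_iff_of_nonneg fun δ _ => csq_nonneg γ δ ψ]
  simp only [Csq, sum_eq_zero_iff_of_nonneg fun _ _ => sq_nonneg _, mem_powerset, mem_univ,
    true_implies, ne_eq, OfNat.ofNat_ne_zero, not_false_eq_true, pow_eq_zero_iff, norm_eq_zero,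
    sub_eq_zero]
  rfl

lemma eta_union_eq_zero {A B : Finset (Fin n)} {ψ : Bits n → ℂ} (hAB : Disjoint A B)
    (hA : eta A ψ = 0) (hB : eta B ψ = 0) : eta (A ∪ B) ψ = 0 :=
  (eta_eq_zero_iff _ _).mpr <|
    ((eta_eq_zero_iff _ _).mp hA).union hAB ((eta_eq_zero_iff _ _).mp hB)

lemma xiP_eq_zero_iff (P : Finset (Finset (Fin n))) (ψ : Bits n → ℂ) :
    xiP P ψ = 0 ↔ ∀ γ ∈ P, eta γ ψ = 0 := by
  rw [← sum_eq_zero_iff_of_nonneg fun γ _ => eta_nonneg γ ψ, xiP, mul_eq_zero]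
  refine ⟨?_, Or.inr⟩
  rintro (hcard | hsum)
  · -- `1 / 0 = 0`: the junk case is the empty family, whose sum vanishes anyway
    rw [one_div, inv_eq_zero, Nat.cast_eq_zero, card_eq_zero] at hcard
    simp [hcard]
  · exact hsum

lemma mem_partitionsM {m : ℕ} {P : Finset (Finset (Fin n))} :
    P ∈ partitionsM n m ↔ IsMPartition n m P := by
  simp [partitionsM]

lemma rm_eq_zero_iff (m : ℕ) (ψ : Bits n → ℂ) :
    Rm n m ψ = 0 ↔ ∃ P, IsMPartition n m P ∧ ∀ γ ∈ P, eta γ ψ = 0 := by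
  rw [Rm, Real.rpow_eq_zero_iff_of_nonneg (prod_nonneg fun P _ => xiP_nonneg P ψ),
    prod_eq_zero_iff]
  simp only [xiP_eq_zero_iff, mem_partitionsM, stirling2, one_div, ne_eq, inv_eq_zero,
    Nat.cast_eq_zero, card_eq_zero, and_iff_left_iff_imp, forall_exists_index, and_imp]
  intro P hP _ hempty
  exact ne_empty_of_mem (mem_partitionsM.mpr hP) hempty

lemma IsMPartition.merge {k : ℕ} {P : Finset (Finset (Fin n))} (hP : IsMPartition n (k + 1) P)
    {A B : Finset (Fin n)} (hA : A ∈ P) (hB : B ∈ P) (hAB : A ≠ B) :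
    IsMPartition n k (insert (A ∪ B) ((P.erase A).erase B)) := by
  obtain ⟨hcard, hne, hdisj, hsup⟩ := hP
  set E := (P.erase A).erase B
  have hBE : B ∈ P.erase A := mem_erase.mpr ⟨hAB.symm, hB⟩
  have hmemE : ∀ {γ}, γ ∈ E → γ ∈ P ∧ γ ≠ A ∧ γ ≠ B := fun hγ => by
    simp only [E, mem_erase] at hγ
    exact ⟨hγ.2.2, hγ.2.1, hγ.1⟩
  have hdisjE : ∀ {γ}, γ ∈ E → Disjoint (A ∪ B) γ := fun hγ => by
    obtain ⟨hγP, hγA, hγB⟩ := hmemE hγ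
    exact disjoint_union_left.mpr ⟨hdisj _ hA _ hγP hγA.symm, hdisj _ hB _ hγP hγB.symm⟩
  have hnotE : A ∪ B ∉ E := fun hmem =>
    (hne A hA).ne_empty <| disjoint_self_iff_empty _ |>.mp <|
      (hdisjE hmem).mono_left subset_union_left |>.mono_right subset_union_left
  refine ⟨?_, ?_, ?_, ?_⟩
  · rw [card_insert_of_notMem hnotE, card_erase_of_mem hBE, card_erase_of_mem hA, hcard]
    have : 2 ≤ P.card := one_lt_card.mpr ⟨A, hA, B, hB, hAB⟩
    omega
  · simp only [mem_insert, forall_eq_or_imp]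
    exact ⟨(hne A hA).mono subset_union_left, fun γ hγ => hne γ (hmemE hγ).1⟩
  · simp only [mem_insert]
    rintro γ (rfl | hγ) γ' (rfl | hγ') hγγ'
    · exact absurd rfl hγγ'
    · exact hdisjE hγ'
    · exact (hdisjE hγ).symm
    · exact hdisj _ (hmemE hγ).1 _ (hmemE hγ').1 hγγ'
  · rw [← insert_erase hA, ← insert_erase hBE, sup_insert, sup_insert] at hsup
    rw [sup_insert, ← hsup]
    exact sup_assoc A B _

lemma exists_isMPartition_of_le {S : Finset (Fin n) → Prop}
    (hS : ∀ A B, Disjoint A B → S A → S B → S (A ∪ B)) {k m : ℕ} (hk : 1 ≤ k) (hkm : k ≤ m)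
    (h : ∃ P, IsMPartition n m P ∧ ∀ γ ∈ P, S γ) :
    ∃ Q, IsMPartition n k Q ∧ ∀ γ ∈ Q, S γ := by
  induction m, hkm using Nat.le_induction with
  | base => exact h
  | succ m hkm ih =>
    obtain ⟨P, hP, hPS⟩ := h
    obtain ⟨A, hA, B, hB, hAB⟩ := one_lt_card.mp (hP.1 ▸ (by omega : 1 < m + 1))
    refine ih ⟨_, hP.merge hA hB hAB, ?_⟩
    simp only [mem_insert, mem_erase]
    rintro γ (rfl | hγ)
    · exact hS A B (hP.2.2.1 A hA B hB hAB) (hPS A hA) (hPS B hB)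
    · exact hPS γ hγ.2.2

end

theorem Rm_zero_mono_general (n m m' : ℕ) (hm' : 2 ≤ m') (hm : m' ≤ m)
    (ψ : Bits n → ℂ)
    (h : Rm n m ψ = 0) : Rm n m' ψ = 0 :=
  (rm_eq_zero_iff m' ψ).mpr <|
    exists_isMPartition_of_le (fun _ _ => eta_union_eq_zero) (by omega) hm
      ((rm_eq_zero_iff m ψ).mp h)

/-- For a unit vector `ψ` on `n` qubits and `2 ≤ m' ≤ m ≤ n`: if `R_m(ψ) = 0`
then `R_{m'}(ψ) = 0`. -/
theorem Rm_zero_mono (n m m' : ℕ) (hn : 2 ≤ n) (hm' : 2 ≤ m') (hm : m' ≤ m) (hmn : m ≤ n)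
    (ψ : Bits n → ℂ) (hψ : ∑ j, ‖ψ j‖ ^ 2 = 1)
    (h : Rm n m ψ = 0) : Rm n m' ψ = 0 :=
  Rm_zero_mono_general n m m' hm' hm ψ h
end
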